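/- Let (u_n) be a weak greedy sequence in 𝒦 with weakness parameter γ ∈ (0,1], and suppose there exist C > 0, c > 0 and 0 < α ≤ 1 such that d_n(𝒦)_H ≤ C e^{−c n^{α}} for all n ≥ 1. Then there exist constants C' > 0 and c̃ > 0 (depending only on C, c, α, γ) such that σ_n(𝒦)_H ≤ C' e^{−c̃ n^{α̃}} for all n ≥ 1, where α̃ := α/(1+α). -/

import Mathlib

/-! The weak greedy errors contract over blocks of steps. If `V` has dimension `m` and approximates
`𝒦` within `d`, the normalized Gram–Schmidt vectors `g_i` of `u_{n+1}, …, u_{n+T}` are orthonormal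
and orthogonal to `H_n`, so by Bessel's inequality some `g_i` has a component of norm at most
`√(m/T)` in the image `W` of `V` in `H_nᗮ`. Since `γ σ_{n+T} ≤ ⟨u_{n+i}, g_i⟩` and `u_{n+i}` is
within `d` of `V`, this gives `γ σ_{n+T} ≤ (σ_n + d) √(m/T) + d`. With `T ≈ 4m/γ²` the error is
halved up to `O(d_m)` per block, so `σ_{jT} ≤ 2^{-j} σ_0 + O(d_m)`, and `m ≈ n^{1/(1+α)}` balances
the two terms at `exp(-c̃ n^{α/(1+α)})`. -/

open Metric

variable {H : Type*} [NormedAddCommGroup H] [InnerProductSpace ℝ H] [CompleteSpace H]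

/-- `greedySpace u n = H_n := span{u_1, …, u_n}` (with `u i` denoting `u_{i+1}`). -/
noncomputable def greedySpace (u : ℕ → H) (n : ℕ) : Submodule ℝ H :=
  Submodule.span ℝ (u '' {i | i < n})

/-- Greedy error `σ_n(𝒦)_H := sup_{v∈𝒦} dist(v, H_n)`. -/
noncomputable def greedyErr (K : Set H) (u : ℕ → H) (n : ℕ) : ℝ :=
  ⨆ v : K, infDist (v : H) (greedySpace u n : Set H)

/-- A weak greedy sequence in `𝒦` with weakness parameter `γ`:
`dist(u_{n+1}, H_n) ≥ γ · sup_{v∈𝒦} dist(v, H_n)` for all `n ≥ 0`. -/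
def IsWeakGreedy (K : Set H) (u : ℕ → H) (γ : ℝ) : Prop :=
  (∀ n, u n ∈ K) ∧
    ∀ n, γ * greedyErr K u n ≤ infDist (u n) (greedySpace u n : Set H)

/-- Kolmogorov `n`-width
`d_n(𝒦)_H := inf {sup_{v∈𝒦} dist(v, V) : V ⊂ H subspace, dim V ≤ n}`. -/
noncomputable def kolWidth (K : Set H) (n : ℕ) : ℝ :=
  ⨅ V : {V : Submodule ℝ H // FiniteDimensional ℝ V ∧ Module.finrank ℝ V ≤ n},
    ⨆ v : K, infDist (v : H) ((V : Submodule ℝ H) : Set H)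

open Bornology InnerProductSpace Module Submodule

section Projection

variable {𝕜 E : Type*} [RCLike 𝕜] [NormedAddCommGroup E] [InnerProductSpace 𝕜 E]

theorem Submodule.infDist_eq_norm_sub_of_sub_mem_orthogonal (K : Submodule 𝕜 E) {x p : E}
    (hp : p ∈ K) (hxp : x - p ∈ Kᗮ) : infDist x K = ‖x - p‖ := by
  rw [infDist_eq_iInf, (K.norm_eq_iInf_iff_inner_eq_zero hp).2 ((K.mem_orthogonal' _).1 hxp)]
  simp_rw [dist_eq_norm]
  rfl

theorem Submodule.infDist_eq_norm_sub_starProjection (K : Submodule 𝕜 E)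
    [K.HasOrthogonalProjection] (x : E) : infDist x K = ‖x - K.starProjection x‖ :=
  K.infDist_eq_norm_sub_of_sub_mem_orthogonal (K.starProjection_apply_mem x)
    (sub_starProjection_mem_orthogonal x)

theorem Submodule.infDist_le_norm (K : Submodule 𝕜 E) (x : E) : infDist x K ≤ ‖x‖ := by
  simpa using infDist_le_dist_of_mem K.zero_mem (x := x)

theorem Submodule.bddAbove_range_infDist {S : Set E} (hS : IsBounded S) (K : Submodule 𝕜 E) :
    BddAbove (Set.range fun v : S ↦ infDist (v : E) K) := by
  obtain ⟨R, hR⟩ := hS.exists_norm_le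
  exact ⟨R, by rintro _ ⟨v, rfl⟩; exact (K.infDist_le_norm v).trans (hR v v.2)⟩

end Projection

section RealInner

variable {E : Type*} [NormedAddCommGroup E] [InnerProductSpace ℝ E]

theorem Orthonormal.sum_norm_sq_starProjection_le_finrank {ι : Type*} [Fintype ι] {g : ι → E}
    (hg : Orthonormal ℝ g) (W : Submodule ℝ E) [FiniteDimensional ℝ W] :
    ∑ i, ‖W.starProjection (g i)‖ ^ 2 ≤ finrank ℝ W := by
  let b := stdOrthonormalBasis ℝ W
  have hproj (x : E) : ‖W.starProjection x‖ ^ 2 = ∑ j, ‖⟪x, (b j : E)⟫_ℝ‖ ^ 2 := by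
    rw [starProjection_apply, ← coe_norm, ← b.sum_sq_norm_inner_right]
    simp_rw [inner_orthogonalProjectionOnto_eq_of_mem_left, real_inner_comm]
  calc ∑ i, ‖W.starProjection (g i)‖ ^ 2
      = ∑ j, ∑ i, ‖⟪g i, (b j : E)⟫_ℝ‖ ^ 2 := by
          rw [← Finset.sum_comm]; exact Finset.sum_congr rfl fun i _ ↦ hproj (g i)
    _ ≤ ∑ j, ‖(b j : E)‖ ^ 2 := by
        gcongr with j
        simpa only [real_inner_comm] using hg.sum_inner_products_le (b j : E) (s := Finset.univ)
    _ = finrank ℝ W := by simp [← coe_norm, b.orthonormal.1]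

theorem Orthonormal.exists_norm_starProjection_le {ι : Type*} [Fintype ι] [Nonempty ι]
    {g : ι → E} (hg : Orthonormal ℝ g) (W : Submodule ℝ E) [FiniteDimensional ℝ W] :
    ∃ i, ‖W.starProjection (g i)‖ ≤ √(finrank ℝ W / Fintype.card ι) := by
  have hcard : (0 : ℝ) < Fintype.card ι := by exact_mod_cast Fintype.card_pos
  obtain ⟨i, -, hi⟩ := Finset.exists_le_of_sum_le Finset.univ_nonempty
    ((hg.sum_norm_sq_starProjection_le_finrank W).trans_eq
      (by simp [Finset.card_univ, mul_div_cancel₀ _ hcard.ne'] :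
        (finrank ℝ W : ℝ) = ∑ _i : ι, (finrank ℝ W : ℝ) / Fintype.card ι))
  exact ⟨i, Real.le_sqrt_of_sq_le hi⟩

theorem real_inner_le_of_mem_orthogonal (M V : Submodule ℝ E) [M.HasOrthogonalProjection]
    [FiniteDimensional ℝ V] {e : E} (he : e ∈ Mᗮ) (he1 : ‖e‖ = 1) (x : E) {v : E} (hv : v ∈ V) :
    ⟪x, e⟫_ℝ ≤ (infDist x M + ‖x - v‖) *
      ‖(V.map (Mᗮ.starProjection : E →ₗ[ℝ] E)).starProjection e‖ + ‖x - v‖ := by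
  set Q := Mᗮ.starProjection
  set W := V.map (Q : E →ₗ[ℝ] E)
  have hQv : Q v ∈ W := mem_map_of_mem hv
  have hQ (y : E) : ‖Q y‖ ≤ ‖y‖ := norm_starProjection_apply_le _ y
  have hsplit : ⟪x, e⟫_ℝ = ⟪Q v, W.starProjection e⟫_ℝ + ⟪Q (x - v), e⟫_ℝ := by
    rw [← W.inner_starProjection_left_eq_right, W.starProjection_eq_self_iff.2 hQv,
      ← inner_add_left, ← map_add, add_sub_cancel, Mᗮ.inner_starProjection_left_eq_right,
      Mᗮ.starProjection_eq_self_iff.2 he]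
  have hQv_le : ‖Q v‖ ≤ infDist x M + ‖x - v‖ := by
    rw [M.infDist_eq_norm_sub_starProjection, ← starProjection_orthogonal_val]
    calc ‖Q v‖ = ‖Q x - Q (x - v)‖ := by rw [map_sub, sub_sub_cancel]
      _ ≤ ‖Q x‖ + ‖x - v‖ := (norm_sub_le _ _).trans (by gcongr; exact hQ _)
  rw [hsplit]
  gcongr
  · exact (real_inner_le_norm _ _).trans (by gcongr)
  · exact (real_inner_le_norm _ _).trans (by rw [he1, mul_one]; exact hQ _)

end RealInner

section GramSchmidt

variable {𝕜 E ι : Type*} [RCLike 𝕜] [NormedAddCommGroup E] [InnerProductSpace 𝕜 E]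
  [LinearOrder ι] [LocallyFiniteOrderBot ι] [WellFoundedLT ι]

theorem gramSchmidt_mem_orthogonal_span_Iio (f : ι → E) (k : ι) :
    gramSchmidt 𝕜 f k ∈ (span 𝕜 (f '' Set.Iio k))ᗮ := by
  rw [← span_gramSchmidt_Iio]
  refine isOrtho_iff_le.1 (isOrtho_span.2 ?_).symm (mem_span_singleton_self _)
  rintro _ ⟨i, hi, rfl⟩ _ rfl
  exact gramSchmidt_orthogonal 𝕜 f hi.ne

theorem sub_gramSchmidt_mem_span_Iio (f : ι → E) (k : ι) :
    f k - gramSchmidt 𝕜 f k ∈ span 𝕜 (f '' Set.Iio k) := by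
  rw [gramSchmidt_def, sub_sub_cancel, ← span_gramSchmidt_Iio]
  refine sum_mem fun i hi ↦ span_mono ?_ (starProjection_apply_mem _ _)
  exact Set.singleton_subset_iff.2 ⟨i, Finset.mem_Iio.1 hi, rfl⟩

theorem norm_gramSchmidt_eq_infDist (f : ι → E) (k : ι) :
    ‖gramSchmidt 𝕜 f k‖ = infDist (f k) (span 𝕜 (f '' Set.Iio k)) := by
  rw [infDist_eq_norm_sub_of_sub_mem_orthogonal _ (sub_gramSchmidt_mem_span_Iio f k)
    (by rw [sub_sub_cancel]; exact gramSchmidt_mem_orthogonal_span_Iio f k), sub_sub_cancel]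

theorem orthonormal_gramSchmidtNormed_add {f : ℕ → E} {n T : ℕ}
    (hf : ∀ i < T, gramSchmidt 𝕜 f (n + i) ≠ 0) :
    Orthonormal 𝕜 fun i : Fin T ↦ gramSchmidtNormed 𝕜 f (n + i) := by
  refine (gramSchmidtNormed_orthonormal' f).comp
    (fun i : Fin T ↦ ⟨n + i, smul_ne_zero (by simpa using hf i i.2) (hf i i.2)⟩) fun i j h ↦ ?_
  simpa [Fin.ext_iff] using congrArg Subtype.val h

end GramSchmidt

theorem real_inner_gramSchmidtNormed_self {E ι : Type*} [NormedAddCommGroup E]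
    [InnerProductSpace ℝ E] [LinearOrder ι] [LocallyFiniteOrderBot ι] [WellFoundedLT ι]
    (f : ι → E) (k : ι) : ⟪f k, gramSchmidtNormed ℝ f k⟫_ℝ = ‖gramSchmidt ℝ f k‖ := by
  have hperp : ⟪f k - gramSchmidt ℝ f k, gramSchmidt ℝ f k⟫_ℝ = 0 :=
    (mem_orthogonal _ _).1 (gramSchmidt_mem_orthogonal_span_Iio f k) _
      (sub_gramSchmidt_mem_span_Iio f k)
  rw [gramSchmidtNormed, real_inner_smul_right, ← sub_add_cancel (f k) (gramSchmidt ℝ f k),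
    inner_add_left, hperp, zero_add, real_inner_self_eq_norm_sq, RCLike.ofReal_real_eq_id, id]
  rcases eq_or_ne ‖gramSchmidt ℝ f k‖ 0 with h | h
  · simp [h]
  · field_simp

section WeakGreedy

variable {E : Type*} [NormedAddCommGroup E] [InnerProductSpace ℝ E] {K : Set E} {u : ℕ → E}
  {γ : ℝ}

instance (u : ℕ → E) (n : ℕ) : FiniteDimensional ℝ (greedySpace u n) :=
  FiniteDimensional.span_of_finite ℝ ((Set.finite_Iio n).image u)

theorem greedySpace_mono (u : ℕ → E) : Monotone (greedySpace u) :=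
  fun _ _ h ↦ span_mono (Set.image_mono fun _ hi ↦ lt_of_lt_of_le hi h)

theorem greedyErr_nonneg (K : Set E) (u : ℕ → E) (n : ℕ) : 0 ≤ greedyErr K u n :=
  Real.iSup_nonneg fun _ ↦ infDist_nonneg

theorem infDist_le_greedyErr (hK : IsBounded K) {x : E} (hx : x ∈ K) (n : ℕ) :
    infDist x (greedySpace u n) ≤ greedyErr K u n :=
  le_ciSup (bddAbove_range_infDist hK _) (⟨x, hx⟩ : K)

theorem greedyErr_antitone (hK : IsBounded K) : Antitone (greedyErr K u) := by
  intro n p hnp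
  rcases isEmpty_or_nonempty K with hK0 | hK0
  · simp [greedyErr]
  refine ciSup_le fun v ↦ le_trans ?_ (infDist_le_greedyErr hK v.2 n)
  exact infDist_le_infDist_of_subset (greedySpace_mono u hnp) ⟨0, zero_mem _⟩

theorem kolWidth_nonneg (K : Set E) (m : ℕ) : 0 ≤ kolWidth K m :=
  Real.iInf_nonneg fun _ ↦ Real.iSup_nonneg fun _ ↦ infDist_nonneg

theorem IsWeakGreedy.mul_greedyErr_le_norm_gramSchmidt (hwg : IsWeakGreedy K u γ) (n : ℕ) :
    γ * greedyErr K u n ≤ ‖gramSchmidt ℝ u n‖ :=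
  (hwg.2 n).trans_eq (norm_gramSchmidt_eq_infDist u n).symm

theorem IsWeakGreedy.mul_greedyErr_add_le (hwg : IsWeakGreedy K u γ) (hK : IsBounded K)
    (hγ : 0 ≤ γ) (n : ℕ) {T : ℕ} (hT : 0 < T) (V : Submodule ℝ E) [FiniteDimensional ℝ V]
    {d : ℝ} (hVd : ∀ x ∈ K, infDist x V ≤ d) :
    γ * greedyErr K u (n + T) ≤ (greedyErr K u n + d) * √(finrank ℝ V / T) + d := by
  have hd : 0 ≤ d := infDist_nonneg.trans (hVd _ (hwg.1 0))
  have hσ := greedyErr_nonneg K u n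
  have hlow (i : ℕ) (hi : i < T) : γ * greedyErr K u (n + T) ≤ ‖gramSchmidt ℝ u (n + i)‖ :=
    (mul_le_mul_of_nonneg_left (greedyErr_antitone hK (by omega)) hγ).trans
      (hwg.mul_greedyErr_le_norm_gramSchmidt _)
  by_cases hzero : ∃ i < T, gramSchmidt ℝ u (n + i) = 0
  · obtain ⟨i, hi, h0⟩ := hzero
    exact (hlow i hi).trans (by rw [h0, norm_zero]; positivity)
  push Not at hzero
  have hg := orthonormal_gramSchmidtNormed_add hzero
  set M := greedySpace u n
  set W := V.map (Mᗮ.starProjection : E →ₗ[ℝ] E)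
  have : Nonempty (Fin T) := ⟨⟨0, hT⟩⟩
  obtain ⟨i, hi⟩ := hg.exists_norm_starProjection_le W
  have hW : ‖W.starProjection (gramSchmidtNormed ℝ u (n + i))‖ ≤ √(finrank ℝ V / T) := by
    refine hi.trans (Real.sqrt_le_sqrt ?_)
    rw [Fintype.card_fin]
    gcongr
    exact finrank_map_le _ V
  have hM : gramSchmidtNormed ℝ u (n + i) ∈ Mᗮ :=
    orthogonal_le (greedySpace_mono u (Nat.le_add_right n i))
      (smul_mem _ _ (gramSchmidt_mem_orthogonal_span_Iio u (n + i)))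
  have hkey := real_inner_le_of_mem_orthogonal M V hM (hg.1 i) (u (n + i))
    (V.starProjection_apply_mem (u (n + i)))
  rw [real_inner_gramSchmidtNormed_self, ← V.infDist_eq_norm_sub_starProjection] at hkey
  calc γ * greedyErr K u (n + T) ≤ ‖gramSchmidt ℝ u (n + i)‖ := hlow i i.2
    _ ≤ _ := hkey
    _ ≤ (greedyErr K u n + d) * √(finrank ℝ V / T) + d := by
      gcongr
      · exact infDist_le_greedyErr hK (hwg.1 _) n
      · exact hVd _ (hwg.1 _)
      · exact hVd _ (hwg.1 _)

theorem IsWeakGreedy.mul_greedyErr_add_le_kolWidth (hwg : IsWeakGreedy K u γ) (hK : IsBounded K)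
    (hγ : 0 ≤ γ) (n : ℕ) {T : ℕ} (hT : 0 < T) (m : ℕ) :
    γ * greedyErr K u (n + T) ≤
      (greedyErr K u n + kolWidth K m) * √(m / T) + kolWidth K m := by
  set s := √(m / T)
  have hs : 0 < s + 1 := by positivity
  suffices (γ * greedyErr K u (n + T) - greedyErr K u n * s) / (s + 1) ≤ kolWidth K m by
    rw [div_le_iff₀ hs] at this
    linarith
  have : Nonempty {V : Submodule ℝ E // FiniteDimensional ℝ V ∧ finrank ℝ V ≤ m} :=
    ⟨⟨⊥, inferInstance, by simp⟩⟩
  refine le_ciInf fun ⟨V, _, hVm⟩ ↦ ?_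
  set d := ⨆ v : K, infDist (v : E) V
  have hV := hwg.mul_greedyErr_add_le hK hγ n hT V (d := d)
    fun x hx ↦ le_ciSup (bddAbove_range_infDist hK V) (⟨x, hx⟩ : K)
  have hσd : 0 ≤ greedyErr K u n + d :=
    add_nonneg (greedyErr_nonneg K u n) (Real.iSup_nonneg fun _ ↦ infDist_nonneg)
  have hsV : (greedyErr K u n + d) * √(finrank ℝ V / T) ≤ (greedyErr K u n + d) * s := by
    gcongr
    exact Real.sqrt_le_sqrt (by gcongr)
  rw [div_le_iff₀ hs]
  linarith

theorem IsWeakGreedy.greedyErr_add_le_half (hwg : IsWeakGreedy K u γ)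
    (hK : IsBounded K) (hγ : 0 < γ) (n : ℕ) {m T : ℕ} (hT : 0 < T) (hmT : 4 * m ≤ γ ^ 2 * T) :
    greedyErr K u (n + T) ≤ greedyErr K u n / 2 + (2⁻¹ + γ⁻¹) * kolWidth K m := by
  have hs : √(m / T) ≤ γ / 2 := by
    rw [Real.sqrt_le_left (by positivity), div_le_iff₀ (by positivity)]
    linarith
  have hσ := greedyErr_nonneg K u n
  have hD := kolWidth_nonneg K m
  refine le_of_mul_le_mul_left ?_ hγ
  calc γ * greedyErr K u (n + T)
      ≤ (greedyErr K u n + kolWidth K m) * √(m / T) + kolWidth K m :=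
        hwg.mul_greedyErr_add_le_kolWidth hK hγ.le n hT m
    _ ≤ (greedyErr K u n + kolWidth K m) * (γ / 2) + kolWidth K m := by gcongr
    _ = γ * (greedyErr K u n / 2 + (2⁻¹ + γ⁻¹) * kolWidth K m) := by field_simp; ring

end WeakGreedy

open Real in
theorem inv_two_pow_div_le (n T : ℕ) : (2 : ℝ)⁻¹ ^ (n / T) ≤ 2 * exp (-log 2 * (n / T : ℝ)) := by
  have hlt : (n / T : ℝ) < (n / T : ℕ) + 1 := by
    rw [← Nat.floor_div_eq_div (K := ℝ)]
    exact Nat.lt_floor_add_one _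
  calc (2 : ℝ)⁻¹ ^ (n / T) = exp (-log 2 * (n / T : ℕ)) := by
        rw [← exp_log (by norm_num : (0 : ℝ) < 2⁻¹), ← exp_nat_mul, log_inv, mul_comm, neg_mul]
    _ ≤ exp (log 2 + -log 2 * (n / T : ℝ)) := by
        gcongr
        nlinarith [log_pos one_lt_two]
    _ = 2 * exp (-log 2 * (n / T : ℝ)) := by rw [exp_add, exp_log two_pos]

theorem le_inv_two_pow_mul_add_of_le_half_add {a : ℕ → ℝ} {B : ℝ} (hB : 0 ≤ B)
    (h : ∀ j, a (j + 1) ≤ a j / 2 + B) (j : ℕ) : a j ≤ 2⁻¹ ^ j * a 0 + 2 * B := by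
  induction j with
  | zero => simp only [pow_zero, one_mul]; linarith
  | succ j ih => rw [pow_succ]; linarith [h j]

open Real in
theorem exists_subexp_bound_of_blockwise_halving {σ d : ℕ → ℝ} {B C c α : ℝ} {L : ℕ}
    (hσ : Antitone σ) (hσ0 : 0 ≤ σ 0) (hB : 0 < B) (hC : 0 < C) (hc : 0 < c) (hα : 0 < α)
    (hL : 0 < L) (hblock : ∀ m, 1 ≤ m → ∀ j, σ (j * (L * m)) ≤ 2⁻¹ ^ j * σ 0 + B * d m)
    (hd : ∀ m : ℕ, 1 ≤ m → d m ≤ C * exp (-c * (m : ℝ) ^ α)) :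
    ∃ C' > (0 : ℝ), ∃ c' > (0 : ℝ), ∀ n : ℕ, 1 ≤ n →
      σ n ≤ C' * exp (-c' * (n : ℝ) ^ (α / (1 + α))) := by
  set c' := min c (log 2 / (2 * L))
  have hc' : 0 < c' := lt_min hc (by have := log_pos one_lt_two; positivity)
  refine ⟨2 * σ 0 + B * C, by positivity, c', hc', fun n hn ↦ ?_⟩
  have hn0 : (0 : ℝ) < n := by exact_mod_cast hn
  set A := (n : ℝ) ^ (α / (1 + α))
  set x := (n : ℝ) ^ (1 + α)⁻¹
  have hAx : A * x = n := by
    have : α / (1 + α) + (1 + α)⁻¹ = 1 := by field_simp; ring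
    rw [← rpow_add hn0, this, rpow_one]
  have hA : A = x ^ α := by rw [← rpow_mul hn0.le, inv_mul_eq_div]
  have hx1 : 1 ≤ x := one_le_rpow (by exact_mod_cast hn) (by positivity)
  set m := ⌈x⌉₊
  have hxm : x ≤ m := Nat.le_ceil x
  have hm2 : (m : ℝ) < 2 * x := Nat.ceil_lt_two_mul (by linarith)
  have hm1 : 1 ≤ m := by exact_mod_cast hx1.trans hxm
  have hwidth : d m ≤ C * exp (-c' * A) := by
    refine (hd m hm1).trans ?_
    have : c' * A ≤ c * m ^ α := by
      gcongr
      · exact min_le_left _ _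
      · rw [hA]; gcongr
    exact mul_le_mul_of_nonneg_left (exp_le_exp.2 (by linarith)) hC.le
  have hgeom : (2 : ℝ)⁻¹ ^ (n / (L * m)) ≤ 2 * exp (-c' * A) := by
    refine (inv_two_pow_div_le n (L * m)).trans ?_
    have hlog := log_pos one_lt_two
    have : c' * A ≤ log 2 * (n / (L * m : ℕ)) := calc
      c' * A ≤ log 2 / (2 * L) * A := by gcongr; exact min_le_right _ _
      _ ≤ log 2 / (2 * L) * A * (2 * x / m) :=
        le_mul_of_one_le_right (by positivity) ((one_le_div (by positivity)).2 hm2.le)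
      _ = log 2 * (n / (L * m : ℕ)) := by rw [← hAx]; push_cast; field_simp
    exact mul_le_mul_of_nonneg_left (exp_le_exp.2 (by linarith)) zero_le_two
  calc σ n ≤ σ (n / (L * m) * (L * m)) := hσ (Nat.div_mul_le_self n _)
    _ ≤ 2⁻¹ ^ (n / (L * m)) * σ 0 + B * d m := hblock m hm1 _
    _ ≤ 2 * exp (-c' * A) * σ 0 + B * (C * exp (-c' * A)) := by gcongr
    _ = (2 * σ 0 + B * C) * exp (-c' * A) := by ring

theorem weakGreedy_subexponential_rate_general
    (K : Set H) (hK : IsCompact K) (u : ℕ → H) (γ : ℝ)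
    (hγ0 : 0 < γ) (hwg : IsWeakGreedy K u γ)
    (C c α : ℝ) (hC : 0 < C) (hc : 0 < c) (hα0 : 0 < α)
    (hd : ∀ n : ℕ, 1 ≤ n → kolWidth K n ≤ C * Real.exp (-c * (n : ℝ) ^ α)) :
    ∃ C' > (0 : ℝ), ∃ ctil > (0 : ℝ), ∀ n : ℕ, 1 ≤ n →
      greedyErr K u n ≤ C' * Real.exp (-ctil * (n : ℝ) ^ (α / (1 + α))) := by
  set L := ⌈4 / γ ^ 2⌉₊
  have hL0 : 0 < L := Nat.ceil_pos.2 (by positivity)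
  have hL : 4 ≤ γ ^ 2 * L := (div_le_iff₀' (by positivity)).1 (Nat.le_ceil _)
  refine exists_subexp_bound_of_blockwise_halving (greedyErr_antitone hK.isBounded)
    (greedyErr_nonneg K u 0) (B := 2 * (2⁻¹ + γ⁻¹)) (by positivity) hC hc hα0
    hL0 (fun m hm j ↦ ?_) hd
  have hmT : 4 * (m : ℝ) ≤ γ ^ 2 * (L * m : ℕ) := by
    have := mul_le_mul_of_nonneg_right hL m.cast_nonneg'
    push_cast
    linarith
  refine (le_inv_two_pow_mul_add_of_le_half_add (a := fun i ↦ greedyErr K u (i * (L * m)))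
    (B := (2⁻¹ + γ⁻¹) * kolWidth K m) (by have := kolWidth_nonneg K m; positivity)
    (fun i ↦ ?_) j).trans_eq (by simp only [zero_mul]; ring)
  rw [add_one_mul]
  exact hwg.greedyErr_add_le_half hK.isBounded hγ0 _ (Nat.mul_pos hL0 hm) hmT

/-- sub-exponential decay `d_n(𝒦)_H ≤ C e^{-c n^α}` (`0 < α ≤ 1`) of the
Kolmogorov widths implies a sub-exponential rate `σ_n(𝒦)_H ≤ C' e^{-c̃ n^{α̃}}` with
`α̃ = α/(1+α)` for the weak greedy errors. -/
theorem weakGreedy_subexponential_rate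
    (K : Set H) (hK : IsCompact K) (u : ℕ → H) (γ : ℝ)
    (hγ0 : 0 < γ) (hγ1 : γ ≤ 1) (hwg : IsWeakGreedy K u γ)
    (C c α : ℝ) (hC : 0 < C) (hc : 0 < c) (hα0 : 0 < α) (hα1 : α ≤ 1)
    (hd : ∀ n : ℕ, 1 ≤ n → kolWidth K n ≤ C * Real.exp (-c * (n : ℝ) ^ α)) :
    ∃ C' > (0 : ℝ), ∃ ctil > (0 : ℝ), ∀ n : ℕ, 1 ≤ n →
      greedyErr K u n ≤ C' * Real.exp (-ctil * (n : ℝ) ^ (α / (1 + α))) :=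
  weakGreedy_subexponential_rate_general K hK u γ hγ0 hwg C c α hC hc hα0 hd
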